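/- For fixed v ∈ ℝ and fixed y ∈ ℝ, the function u(x, y) = (1/(2π)) ∫_x^∞ K₀(√(ξ² + y²)·√(1 + v²/4)) exp(-(v/2)ξ) dξ satisfies lim_{x → -∞} u(x, y) = e^{-|y|}/2. -/

import Mathlib

open Real Filter Set MeasureTheory

/-- Modified Bessel function of the second kind of order 0. -/
noncomputable def K0 (r : ℝ) : ℝ := ∫ t in Ioi (0 : ℝ), Real.exp (-r * Real.cosh t)

/-- The travelling front profile. -/
noncomputable def frontProfile (v x y : ℝ) : ℝ :=
  (1 / (2 * π)) *
    ∫ ξ in Ioi x,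
      K0 (Real.sqrt (ξ ^ 2 + y ^ 2) * Real.sqrt (1 + v ^ 2 / 4)) *
        Real.exp (-(v / 2) * ξ)

/-! Writing `K₀(r) = ∫₀^∞ (2t)⁻¹ exp (-t - r²/4t) dt` makes the integrand of `u` Gaussian in `ξ`.
Integrating `ξ` out first leaves `∫₀^∞ t^{-1/2} exp (-p²t - q²/t) dt = (√π / p) e^{-2pq}`, which the
substitution `t = (q/p) e^{2w}` reduces to a Gaussian integral in `sinh w`. Hence
`∫_ℝ K₀(c √(ξ² + y²)) e^{-bξ} dξ = (π / d) e^{-d|y|}` whenever `c² - b² = d²`, and `u(x, y)` tends to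
`1/(2π)` times this full-line integral as `x → -∞`. -/

lemma exp_neg_mul_sq_sub_mul_eq {a : ℝ} (ha : 0 < a) (β x : ℝ) :
    exp (-(a * x ^ 2) - β * x) = exp (β ^ 2 / (4 * a)) * exp (-a * (x + β / (2 * a)) ^ 2) := by
  rw [← exp_add]; congr 1; field_simp; ring

lemma integrable_exp_neg_mul_sq_sub_mul {a : ℝ} (ha : 0 < a) (β : ℝ) :
    Integrable fun x : ℝ => exp (-(a * x ^ 2) - β * x) := by
  simp only [exp_neg_mul_sq_sub_mul_eq ha]
  exact ((integrable_exp_neg_mul_sq ha).comp_add_right _).const_mul _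

lemma integral_exp_neg_mul_sq_sub_mul {a : ℝ} (ha : 0 < a) (β : ℝ) :
    ∫ x : ℝ, exp (-(a * x ^ 2) - β * x) = √(π / a) * exp (β ^ 2 / (4 * a)) := by
  simp only [exp_neg_mul_sq_sub_mul_eq ha]
  rw [integral_const_mul, integral_add_right_eq_self (fun x => exp (-a * x ^ 2)),
    integral_gaussian, mul_comm]

section Substitution

variable {E : Type*} [NormedAddCommGroup E] [NormedSpace ℝ E]

lemma integral_cosh_smul_comp_sinh (f : ℝ → E) :
    ∫ w, cosh w • f (sinh w) = ∫ z, f z := by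
  simpa [sinh_surjective.range_eq, abs_of_pos (cosh_pos _)] using
    (integral_image_eq_integral_abs_deriv_smul MeasurableSet.univ
      (fun w _ => (hasDerivAt_sinh w).hasDerivWithinAt) sinh_injective.injOn f).symm

lemma integrable_cosh_smul_comp_sinh_iff (f : ℝ → E) :
    Integrable (fun w => cosh w • f (sinh w)) ↔ Integrable f := by
  simpa [sinh_surjective.range_eq, abs_of_pos (cosh_pos _)] using
    (integrableOn_image_iff_integrableOn_abs_deriv_smul MeasurableSet.univ
      (fun w _ => (hasDerivAt_sinh w).hasDerivWithinAt) sinh_injective.injOn f).symm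

lemma range_const_mul_exp_const_mul {c k : ℝ} (hc : 0 < c) (hk : k ≠ 0) :
    range (fun u => c * exp (k * u)) = Ioi 0 := by
  ext t
  refine ⟨by rintro ⟨u, rfl⟩; exact mul_pos hc (exp_pos _), fun ht => ⟨log (t / c) / k, ?_⟩⟩
  simp only [mul_div_cancel₀ _ hk, exp_log (div_pos ht hc), mul_div_cancel₀ _ hc.ne']

lemma integral_Ioi_eq_integral_comp_const_mul_exp {c k : ℝ} (hc : 0 < c) (hk : 0 < k)
    (f : ℝ → E) :
    ∫ t in Ioi 0, f t = ∫ u, (c * k * exp (k * u)) • f (c * exp (k * u)) := by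
  have hderiv (u : ℝ) : HasDerivAt (fun u => c * exp (k * u)) (c * k * exp (k * u)) u := by
    simpa [mul_comm, mul_left_comm, mul_assoc] using
      ((hasDerivAt_exp (k * u)).comp u ((hasDerivAt_id u).const_mul k)).const_mul c
  have hinj : Function.Injective fun u => c * exp (k * u) := fun u v h => by
    simpa [hc.ne', hk.ne'] using h
  simpa [image_univ, range_const_mul_exp_const_mul hc hk.ne', abs_of_pos, hc, hk] using
    integral_image_eq_integral_abs_deriv_smul MeasurableSet.univ
      (fun u _ => (hderiv u).hasDerivWithinAt) hinj.injOn f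

end Substitution

lemma cosh_mul_exp_neg_mul_cosh_two_mul_eq (m w : ℝ) :
    cosh w * exp (-m * cosh (2 * w)) = cosh w • (exp (-m) * exp (-(2 * m) * sinh w ^ 2)) := by
  rw [smul_eq_mul, ← exp_add, cosh_two_mul, cosh_sq]; ring_nf

lemma integrable_cosh_mul_exp_neg_mul_cosh_two_mul {m : ℝ} (hm : 0 < m) :
    Integrable fun w => cosh w * exp (-m * cosh (2 * w)) := by
  simp only [cosh_mul_exp_neg_mul_cosh_two_mul_eq]
  exact (integrable_cosh_smul_comp_sinh_iff _).2
    ((integrable_exp_neg_mul_sq (by positivity)).const_mul _)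

lemma integral_cosh_mul_exp_neg_mul_cosh_two_mul (m : ℝ) :
    ∫ w, cosh w * exp (-m * cosh (2 * w)) = exp (-m) * √(π / (2 * m)) := by
  simp only [cosh_mul_exp_neg_mul_cosh_two_mul_eq]
  rw [integral_cosh_smul_comp_sinh (fun z => exp (-m) * exp (-(2 * m) * z ^ 2)),
    integral_const_mul, integral_gaussian]

lemma integral_exp_mul_exp_neg_mul_cosh_two_mul {m : ℝ} (hm : 0 < m) :
    ∫ w, exp w * exp (-m * cosh (2 * w)) = exp (-m) * √(π / (2 * m)) := by
  set g := fun w => exp w * exp (-m * cosh (2 * w))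
  have hg : Integrable g := by
    refine ((integrable_cosh_mul_exp_neg_mul_cosh_two_mul hm).const_mul 2).mono'
      (by fun_prop) (ae_of_all _ fun w => ?_)
    rw [norm_of_nonneg (by positivity), cosh_eq]
    nlinarith [exp_pos (-w), exp_pos (-m * cosh (2 * w))]
  have hsymm : ∫ w, g w = (∫ w, (g w + g (-w))) / 2 := by
    rw [integral_add hg hg.comp_neg, integral_neg_eq_self]; ring
  have hsum (w : ℝ) : g w + g (-w) = 2 * (cosh w * exp (-m * cosh (2 * w))) := by
    simp only [g, mul_neg, cosh_neg, cosh_eq w]; ring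
  simp only [hsymm, hsum, integral_const_mul, integral_cosh_mul_exp_neg_mul_cosh_two_mul]
  ring

lemma integral_Ioi_inv_sqrt_mul_exp_neg_mul {p : ℝ} (hp : 0 < p) :
    ∫ t in Ioi 0, (√t)⁻¹ * exp (-(p ^ 2 * t)) = √π / p := by
  have h := integral_rpow_mul_exp_neg_mul_Ioi (a := 1 / 2) (r := p ^ 2) (by norm_num) (by positivity)
  rw [Gamma_one_half_eq, ← sqrt_eq_rpow, sqrt_div' _ (by positivity), sqrt_sq hp.le,
    sqrt_one] at h
  rw [div_eq_mul_inv, mul_comm, ← one_div, ← h]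
  refine setIntegral_congr_fun measurableSet_Ioi fun t (ht : 0 < t) => ?_
  rw [sqrt_eq_rpow, ← rpow_neg ht.le]
  norm_num

lemma integral_Ioi_inv_sqrt_mul_exp_neg_mul_sub_div {p q : ℝ} (hp : 0 < p) (hq : 0 ≤ q) :
    ∫ t in Ioi 0, (√t)⁻¹ * exp (-(p ^ 2 * t) - q ^ 2 / t) = √π / p * exp (-(2 * p * q)) := by
  rcases hq.eq_or_lt with rfl | hq
  · simpa using integral_Ioi_inv_sqrt_mul_exp_neg_mul hp
  -- substitute `t = (q / p) e^{2w}`, which turns `p² t + q² / t` into `2pq cosh 2w`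
  have hγ : 0 < q / p := div_pos hq hp
  have hsubst (w : ℝ) : (q / p * 2 * exp (2 * w)) • ((√(q / p * exp (2 * w)))⁻¹ *
        exp (-(p ^ 2 * (q / p * exp (2 * w))) - q ^ 2 / (q / p * exp (2 * w)))) =
      2 * √(q / p) * (exp w * exp (-(2 * p * q) * cosh (2 * w))) := by
    have he : exp (2 * w) = exp w ^ 2 := by rw [← exp_nat_mul]; norm_num
    have hs : √(q / p) ≠ 0 := (sqrt_pos.2 hγ).ne'
    rw [smul_eq_mul, he, sqrt_mul hγ.le, sqrt_sq (exp_pos w).le, cosh_eq, exp_neg, he]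
    have hexp : -(p ^ 2 * (q / p * exp w ^ 2)) - q ^ 2 / (q / p * exp w ^ 2) =
        -(2 * p * q) * ((exp w ^ 2 + (exp w ^ 2)⁻¹) / 2) := by
      field_simp; ring
    rw [hexp]
    field_simp
    rw [sq_sqrt hγ.le]
    field_simp
  rw [integral_Ioi_eq_integral_comp_const_mul_exp hγ two_pos]
  simp only [hsubst, integral_const_mul, integral_exp_mul_exp_neg_mul_cosh_two_mul
    (by positivity : 0 < 2 * p * q)]
  have hc : √π / p = 2 * √(q / p) * √(π / (2 * (2 * p * q))) := by
    rw [mul_assoc, ← sqrt_mul hγ.le, show q / p * (π / (2 * (2 * p * q))) = π / p ^ 2 / 2 ^ 2 by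
      field_simp, sqrt_div' _ (by positivity), sqrt_div' _ (by positivity),
      sqrt_sq hp.le, sqrt_sq zero_le_two]
    field_simp
  rw [hc]; ring

lemma K0_eq_integral_Ioi {r : ℝ} (hr : 0 < r) :
    K0 r = ∫ t in Ioi 0, (2 * t)⁻¹ * exp (-t - r ^ 2 / (4 * t)) := by
  -- substitute `t = (r / 2) eᵘ`, which turns `t + r² / 4t` into `r cosh u`
  have hsubst (u : ℝ) : (r / 2 * 1 * exp (1 * u)) • ((2 * (r / 2 * exp (1 * u)))⁻¹ *
      exp (-(r / 2 * exp (1 * u)) - r ^ 2 / (4 * (r / 2 * exp (1 * u))))) =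
      2⁻¹ * exp (-r * cosh |u|) := by
    rw [cosh_abs, cosh_eq, exp_neg, smul_eq_mul, one_mul, mul_one]
    field_simp
    congr 1
    field_simp
    ring
  rw [integral_Ioi_eq_integral_comp_const_mul_exp (half_pos hr) one_pos]
  simp only [hsubst, integral_const_mul]
  rw [integral_comp_abs (f := fun u => exp (-r * cosh u)), K0]
  ring

-- the integrand of `K₀(c √(ξ² + y²)) e^{-bξ}` once `K₀` is written as in `K0_eq_integral_Ioi`
noncomputable def heatIntegrand (b c y t ξ : ℝ) : ℝ :=
  (2 * t)⁻¹ * exp (-t - c ^ 2 * (ξ ^ 2 + y ^ 2) / (4 * t) - b * ξ)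

section HeatIntegrand

variable {b c d y t : ℝ}

lemma heatIntegrand_eq (ht : 0 < t) (ξ : ℝ) :
    heatIntegrand b c y t ξ = (2 * t)⁻¹ * exp (-t - c ^ 2 * y ^ 2 / (4 * t)) *
      exp (-(c ^ 2 / (4 * t) * ξ ^ 2) - b * ξ) := by
  rw [heatIntegrand, mul_assoc, ← exp_add]
  congr 2
  field_simp
  ring

lemma integrable_heatIntegrand (hc : 0 < c) (ht : 0 < t) : Integrable (heatIntegrand b c y t) := by
  simp only [funext (heatIntegrand_eq ht)]
  exact (integrable_exp_neg_mul_sq_sub_mul (by positivity) b).const_mul _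

lemma integral_heatIntegrand (hc : 0 < c) (hcbd : c ^ 2 - b ^ 2 = d ^ 2) (ht : 0 < t) :
    ∫ ξ, heatIntegrand b c y t ξ =
      √π / c * ((√t)⁻¹ * exp (-((d / c) ^ 2 * t) - (c * |y| / 2) ^ 2 / t)) := by
  simp only [heatIntegrand_eq ht]
  rw [integral_const_mul, integral_exp_neg_mul_sq_sub_mul (by positivity),
    show π / (c ^ 2 / (4 * t)) = (2 * √t * √π / c) ^ 2 by
      rw [div_pow, mul_pow, mul_pow, sq_sqrt ht.le, sq_sqrt pi_pos.le]; field_simp; ring,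
    sqrt_sq (by positivity)]
  have hexp : -t - c ^ 2 * y ^ 2 / (4 * t) + b ^ 2 / (4 * (c ^ 2 / (4 * t))) =
      -((d / c) ^ 2 * t) - (c * |y| / 2) ^ 2 / t := by
    rw [div_pow d, ← hcbd, div_pow, mul_pow, sq_abs]; field_simp; ring
  rw [← hexp, exp_add]
  have hst : √t ^ 2 = t := sq_sqrt ht.le
  field_simp
  rw [hst]

lemma measurable_uncurry_heatIntegrand : Measurable (Function.uncurry (heatIntegrand b c y)) := by
  unfold heatIntegrand Function.uncurry
  fun_prop

lemma integrable_uncurry_heatIntegrand (hc : 0 < c) (hd : 0 < d) (hcbd : c ^ 2 - b ^ 2 = d ^ 2) :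
    Integrable (Function.uncurry (heatIntegrand b c y)) ((volume.restrict (Ioi 0)).prod volume) := by
  have hnonneg (t : ℝ) (ht : 0 < t) (ξ : ℝ) : 0 ≤ heatIntegrand b c y t ξ := by
    unfold heatIntegrand; positivity
  -- integrable because its integral is nonzero (Bochner integrals of non-integrable maps are `0`)
  have hS : IntegrableOn (fun t => (√t)⁻¹ * exp (-((d / c) ^ 2 * t) - (c * |y| / 2) ^ 2 / t))
      (Ioi 0) := by
    refine Integrable.of_integral_ne_zero ?_
    rw [integral_Ioi_inv_sqrt_mul_exp_neg_mul_sub_div (by positivity) (by positivity)]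
    positivity
  rw [integrable_prod_iff measurable_uncurry_heatIntegrand.aestronglyMeasurable]
  refine ⟨(ae_restrict_mem measurableSet_Ioi).mono fun t ht => integrable_heatIntegrand hc ht,
    (hS.const_mul (√π / c)).congr ?_⟩
  filter_upwards [ae_restrict_mem measurableSet_Ioi] with t (ht : 0 < t)
  rw [← integral_heatIntegrand hc hcbd ht]
  congr with ξ
  exact (norm_of_nonneg (hnonneg t ht ξ)).symm

lemma K0_sqrt_mul_mul_exp_ae_eq_integral_heatIntegrand (hc : 0 < c) :
    ∀ᵐ ξ, K0 (√(ξ ^ 2 + y ^ 2) * c) * exp (-b * ξ) = ∫ t in Ioi 0, heatIntegrand b c y t ξ := by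
  filter_upwards [Measure.ae_ne volume 0] with ξ hξ
  have hr : 0 < √(ξ ^ 2 + y ^ 2) * c := mul_pos (sqrt_pos.2 (by positivity)) hc
  rw [K0_eq_integral_Ioi hr, ← integral_mul_const]
  congr with t
  rw [heatIntegrand, mul_pow, sq_sqrt (by positivity), mul_assoc, ← exp_add]
  ring_nf

lemma integral_K0_sqrt_mul_mul_exp (hc : 0 < c) (hd : 0 < d) (hcbd : c ^ 2 - b ^ 2 = d ^ 2) :
    ∫ ξ, K0 (√(ξ ^ 2 + y ^ 2) * c) * exp (-b * ξ) = π / d * exp (-(d * |y|)) := by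
  rw [integral_congr_ae (K0_sqrt_mul_mul_exp_ae_eq_integral_heatIntegrand hc),
    ← integral_integral_swap (integrable_uncurry_heatIntegrand hc hd hcbd),
    setIntegral_congr_fun measurableSet_Ioi fun t ht => integral_heatIntegrand hc hcbd ht,
    integral_const_mul, integral_Ioi_inv_sqrt_mul_exp_neg_mul_sub_div (by positivity)
      (by positivity), show 2 * (d / c) * (c * |y| / 2) = d * |y| by field_simp]
  field_simp
  exact sq_sqrt pi_pos.le

end HeatIntegrand

theorem stmt_11 (v y : ℝ) :
    Tendsto (fun x : ℝ => frontProfile v x y) atBot (nhds (Real.exp (-|y|) / 2)) := by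
  have hc : 0 < √(1 + v ^ 2 / 4) := sqrt_pos.2 (by positivity)
  have hcb : √(1 + v ^ 2 / 4) ^ 2 - (v / 2) ^ 2 = 1 ^ 2 := by
    rw [sq_sqrt (by positivity)]; ring
  have hI := integral_K0_sqrt_mul_mul_exp (y := y) hc one_pos hcb
  have hint := Integrable.of_integral_ne_zero (by rw [hI]; positivity)
  have hlim := ((aecover_Ioi tendsto_id).integral_tendsto_of_countably_generated hint).const_mul
    (1 / (2 * π))
  rwa [hI, one_mul, div_one, show 1 / (2 * π) * (π * exp (-|y|)) = exp (-|y|) / 2 by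
    field_simp] at hlim
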